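/- arXiv:2402.04935 — 4 statements merged into one kernel-verified Lean document; each statement's English description precedes it below -/
import Mathlib

section
/- Let H_1, …, H_m be finitely many affine hyperplanes in ℝ^n, and let d(x,S) := inf_{y∈S} ‖x−y‖_∞ denote the supremum-norm distance from a point to a set. Then there exists a constant Γ>0 such that for every nonempty F ⊆ {1,…,m} with ⋂_{i∈F} H_i ≠ ∅ and every x∈ℝ^n: d(x, ⋂_{i∈F} H_i) ≤ Γ · max_{i∈F} d(x, H_i). -/
/-!
This is Hoffman's error bound for systems of linear equations. For a compatible subfamily `F`,
the intersection `⋂ i ∈ F, Hᵢ` is a fibre of the linear map `y ↦ (aᵢ ⬝ᵥ y)_{i ∈ F}`, which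
becomes injective, hence antilipschitz, on the finite-dimensional quotient by its kernel; so the
distance to the fibre is at most a constant times the sup norm of the residual vector
`(aᵢ ⬝ᵥ x - bᵢ)_{i ∈ F}`. Each residual is at most the Lipschitz constant of `aᵢ ⬝ᵥ ·` times
the distance to `Hᵢ`. As there are only finitely many subfamilies and rows, both constants
can be taken uniform.
-/
open Metric Set Matrix NNReal

theorem LipschitzWith.abs_sub_le_mul_infDist {X : Type*} [PseudoMetricSpace X] {g : X → ℝ}
    {K : ℝ≥0} (hg : LipschitzWith K g) {c : ℝ} {s : Set X} (hs : s.Nonempty)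
    (hlevel : ∀ y ∈ s, g y = c) (x : X) : |g x - c| ≤ K * infDist x s := by
  have : Nonempty s := hs.to_subtype
  rw [infDist_eq_iInf, Real.mul_iInf_of_nonneg K.coe_nonneg]
  refine le_ciInf fun ⟨y, hy⟩ => ?_
  simpa [← hlevel y hy, Real.dist_eq] using hg.dist_le_mul x y

section
variable {𝕜 E F : Type*} [NontriviallyNormedField 𝕜] [CompleteSpace 𝕜]
  [NormedAddCommGroup E] [NormedSpace 𝕜 E] [FiniteDimensional 𝕜 E]
  [NormedAddCommGroup F] [NormedSpace 𝕜 F]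

theorem LinearMap.exists_infDist_ker_le (L : E →ₗ[𝕜] F) :
    ∃ K : ℝ, ∀ x, infDist x (LinearMap.ker L : Set E) ≤ K * ‖L x‖ := by
  have : IsClosed (LinearMap.ker L : Set E) := Submodule.closed_of_finiteDimensional _
  obtain ⟨K, -, hK⟩ := LinearMap.exists_antilipschitzWith ((LinearMap.ker L).liftQ L le_rfl)
    (Submodule.ker_liftQ_eq_bot _ _ _ le_rfl)
  refine ⟨K, fun x => ?_⟩
  have hquot : ‖(Submodule.Quotient.mk x : E ⧸ LinearMap.ker L)‖ = infDist x (LinearMap.ker L) :=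
    QuotientAddGroup.norm_mk (S := (LinearMap.ker L).toAddSubgroup) x
  rw [← hquot]
  simpa using hK.le_mul_dist (Submodule.Quotient.mk x : E ⧸ LinearMap.ker L) 0

theorem LinearMap.exists_infDist_preimage_le (L : E →ₗ[𝕜] F) :
    ∃ K : ℝ, ∀ x y, infDist x (L ⁻¹' {L y}) ≤ K * ‖L x - L y‖ := by
  obtain ⟨K, hK⟩ := L.exists_infDist_ker_le
  refine ⟨K, fun x y => ?_⟩
  have htrans : (y + ·) '' (LinearMap.ker L : Set E) ⊆ L ⁻¹' {L y} := by
    rintro _ ⟨z, hz, rfl⟩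
    simp_all
  calc infDist x (L ⁻¹' {L y})
      ≤ infDist (y + (x - y)) ((y + ·) '' (LinearMap.ker L : Set E)) := by
        rw [add_sub_cancel]
        exact infDist_le_infDist_of_subset htrans ⟨y, 0, by simp⟩
    _ = infDist (x - y) (LinearMap.ker L : Set E) :=
        infDist_image (IsometryEquiv.addLeft y).isometry
    _ ≤ K * ‖L x - L y‖ := by simpa using hK (x - y)
end

theorem exists_pos_forall_of_monotone {ι : Type*} [Finite ι] {P : ι → ℝ → Prop}
    (hmono : ∀ i, Monotone (P i)) (h : ∀ i, ∃ Γ, P i Γ) : ∃ Γ > 0, ∀ i, P i Γ := by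
  choose g hg using h
  obtain ⟨M, hM⟩ := (Set.finite_range g).bddAbove
  exact ⟨max M 1, by positivity, fun i => hmono i ((hM ⟨i, rfl⟩).trans (le_max_left _ _)) (hg i)⟩

section Hyperplanes
variable {ι κ : Type*} [Fintype ι] [Fintype κ] (a : ι → κ → ℝ) (b : ι → ℝ)

theorem exists_infDist_iInter_hyperplanes_le_mul_norm_residual :
    ∃ Γ > 0, ∀ (F : Finset ι), ∀ x₀ ∈ ⋂ i ∈ F, {y | a i ⬝ᵥ y = b i}, ∀ x,
      infDist x (⋂ i ∈ F, {y | a i ⬝ᵥ y = b i}) ≤ Γ * ‖fun i : F => a i ⬝ᵥ x - b i‖ := by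
  refine exists_pos_forall_of_monotone
    (fun F Γ Γ' hΓΓ' hΓ x₀ hx₀ x => (hΓ x₀ hx₀ x).trans (by gcongr)) (fun F => ?_)
  obtain ⟨K, hK⟩ := (mulVecLin (fun i : F => a i)).exists_infDist_preimage_le
  refine ⟨K, fun x₀ hx₀ x => ?_⟩
  simp only [mem_iInter₂, mem_ofPred_eq] at hx₀
  have hrow : ∀ y (i : F), mulVecLin (fun i : F => a i) y i = a i ⬝ᵥ y := fun _ _ => rfl
  have hsol : ⋂ i ∈ F, {y | a i ⬝ᵥ y = b i}
      = mulVecLin (fun i : F => a i) ⁻¹' {mulVecLin (fun i : F => a i) x₀} := by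
    ext y
    simp only [mem_iInter₂, mem_ofPred_eq, mem_preimage, mem_singleton_iff, funext_iff, hrow,
      Subtype.forall]
    exact forall₂_congr fun i hi => by rw [hx₀ i hi]
  have hres : mulVecLin (fun i : F => a i) x - mulVecLin (fun i : F => a i) x₀
      = fun i : F => a i ⬝ᵥ x - b i := by
    funext i
    rw [Pi.sub_apply, hrow, hrow, hx₀ i i.2]
  rw [hsol, ← hres]
  exact hK x x₀

theorem exists_abs_dotProduct_sub_le_mul_infDist :
    ∃ N > 0, ∀ i, {y | a i ⬝ᵥ y = b i}.Nonempty → ∀ x,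
      |a i ⬝ᵥ x - b i| ≤ N * infDist x {y | a i ⬝ᵥ y = b i} := by
  refine exists_pos_forall_of_monotone (fun i N N' hNN' hN hne x => ?_) (fun i => ?_)
  · exact (hN hne x).trans (by gcongr; exact infDist_nonneg)
  · exact ⟨_, fun hne x => (dotProductBilin ℝ ℝ (a i)).toContinuousLinearMap.lipschitz
      |>.abs_sub_le_mul_infDist hne (fun _ hy => hy) x⟩

theorem exists_norm_residual_le_mul_sup'_infDist :
    ∃ N > 0, ∀ (F : Finset ι) (hF : F.Nonempty), (⋂ i ∈ F, {y | a i ⬝ᵥ y = b i}).Nonempty →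
      ∀ x, ‖fun i : F => a i ⬝ᵥ x - b i‖
        ≤ N * F.sup' hF (fun i => infDist x {y | a i ⬝ᵥ y = b i}) := by
  obtain ⟨N, hN, hrow⟩ := exists_abs_dotProduct_sub_le_mul_infDist a b
  refine ⟨N, hN, fun F hF ⟨x₀, hx₀⟩ x => ?_⟩
  rw [mem_iInter₂] at hx₀
  have hsup : ∀ i ∈ F, infDist x {y | a i ⬝ᵥ y = b i}
      ≤ F.sup' hF (fun i => infDist x {y | a i ⬝ᵥ y = b i}) :=
    fun i hi => F.le_sup' (fun i => infDist x {y | a i ⬝ᵥ y = b i}) hi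
  obtain ⟨i₀, hi₀⟩ := hF
  refine (pi_norm_le_iff_of_nonneg ?_).2 fun i => ?_
  · exact mul_nonneg hN.le (infDist_nonneg.trans (hsup i₀ hi₀))
  · rw [Real.norm_eq_abs]
    exact (hrow i ⟨x₀, hx₀ i i.2⟩ x).trans (by gcongr; exact hsup i i.2)

end Hyperplanes

theorem dist_to_hyperplane_intersection_general (n m : ℕ)
    (a : Fin m → (Fin n → ℝ)) (b : Fin m → ℝ) :
    ∃ Γ : ℝ, 0 < Γ ∧
      ∀ (F : Finset (Fin m)) (hF : F.Nonempty),
        (⋂ i ∈ F, {x : Fin n → ℝ | ∑ j, a i j * x j = b i}).Nonempty →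
        ∀ x : Fin n → ℝ,
          Metric.infDist x (⋂ i ∈ F, {y : Fin n → ℝ | ∑ j, a i j * y j = b i})
            ≤ Γ * F.sup' hF
                (fun i => Metric.infDist x {y : Fin n → ℝ | ∑ j, a i j * y j = b i}) := by
  obtain ⟨Γ, hΓ, hoffman⟩ := exists_infDist_iInter_hyperplanes_le_mul_norm_residual a b
  obtain ⟨N, hN, hresidual⟩ := exists_norm_residual_le_mul_sup'_infDist a b
  refine ⟨Γ * N, by positivity, fun F hF ⟨x₀, hx₀⟩ x => ?_⟩
  calc infDist x (⋂ i ∈ F, {y | a i ⬝ᵥ y = b i})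
      ≤ Γ * ‖fun i : F => a i ⬝ᵥ x - b i‖ := hoffman F x₀ hx₀ x
    _ ≤ Γ * (N * F.sup' hF (fun i => infDist x {y | a i ⬝ᵥ y = b i})) := by
        gcongr; exact hresidual F hF ⟨x₀, hx₀⟩ x
    _ = Γ * N * F.sup' hF (fun i => infDist x {y | a i ⬝ᵥ y = b i}) := by ring

/-- For finitely many affine hyperplanes in `ℝⁿ` (with the sup norm),
there is a constant `Γ > 0` such that for every compatible subfamily `F`, the distance
from any point to the common intersection of the hyperplanes in `F` is at most `Γ`
times the maximum distance to an individual hyperplane of `F`. -/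
theorem dist_to_hyperplane_intersection (n m : ℕ)
    (a : Fin m → (Fin n → ℝ)) (b : Fin m → ℝ) (ha : ∀ i, a i ≠ 0) :
    ∃ Γ : ℝ, 0 < Γ ∧
      ∀ (F : Finset (Fin m)) (hF : F.Nonempty),
        (⋂ i ∈ F, {x : Fin n → ℝ | ∑ j, a i j * x j = b i}).Nonempty →
        ∀ x : Fin n → ℝ,
          Metric.infDist x (⋂ i ∈ F, {y : Fin n → ℝ | ∑ j, a i j * y j = b i})
            ≤ Γ * F.sup' hF
                (fun i => Metric.infDist x {y : Fin n → ℝ | ∑ j, a i j * y j = b i}) :=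
  dist_to_hyperplane_intersection_general n m a b
end

section
/- Let H_1, …, H_m be finitely many affine hyperplanes in ℝ^n, and let d(x,S) := inf_{y∈S} ‖x−y‖_∞ denote the supremum-norm distance from a point to a set. Then there exists a constant r_c>0 such that for every x∈ℝ^n, the subfamily {H_i : H_i ∩ B_{r_c}(x) ≠ ∅} of hyperplanes meeting the closed sup-norm ball of radius r_c around x is compatible, i.e., its members have a common point (provided the subfamily is nonempty). -/
/-!
If a finite family of affine hyperplanes `⟨aᵢ, y⟩ = bᵢ` has empty intersection, then `b` lies at
some positive distance `δ` from the range of `L y = (⟨aᵢ, y⟩)ᵢ`, which is closed since it is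
finite-dimensional. So at every point `x` some coordinate `|⟨aᵢ, x⟩ - bᵢ|` is at least `δ`, and
then `x` is at distance at least `δ / (‖L‖ + 1)` from that hyperplane. A radius below all these
constants, over the finitely many incompatible subfamilies, works.
-/

open Metric

variable {X E ι : Type*}

def UniformlyIncompatible [PseudoMetricSpace X] (H : ι → Set X) (s : Set ι) : Prop :=
  ∃ c > 0, ∀ x, ∃ i ∈ s, Disjoint (H i) (ball x c)

theorem exists_radius_iInter_nonempty [PseudoMetricSpace X] [Finite ι] (H : ι → Set X)
    (hH : ∀ s : Set ι, (⋂ i ∈ s, H i) = ∅ → UniformlyIncompatible H s) :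
    ∃ r > 0, ∀ x, (⋂ i ∈ {i | (H i ∩ closedBall x r).Nonempty}, H i).Nonempty := by
  have hc : ∀ s : Set ι, ∃ c > 0,
      (⋂ i ∈ s, H i) = ∅ → ∀ x, ∃ i ∈ s, Disjoint (H i) (ball x c) := by
    intro s
    by_cases hs : (⋂ i ∈ s, H i) = ∅
    · obtain ⟨c, hc, h⟩ := hH s hs
      exact ⟨c, hc, fun _ => h⟩
    · exact ⟨1, one_pos, fun h => absurd h hs⟩
  choose c hc_pos hc_sep using hc
  obtain ⟨s₀, hs₀⟩ := Finite.exists_min c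
  refine ⟨c s₀ / 2, half_pos (hc_pos s₀), fun x => ?_⟩
  by_contra hempty
  set s := {i | (H i ∩ closedBall x (c s₀ / 2)).Nonempty}
  obtain ⟨i, ⟨y, hyH, hyx⟩, hdisj⟩ := hc_sep s (Set.not_nonempty_iff_eq_empty.mp hempty) x
  have hyball : y ∈ ball x (c s) :=
    closedBall_subset_ball (by linarith [hc_pos s₀, hs₀ s]) hyx
  exact hdisj.notMem_of_mem_left hyH hyball

theorem uniformlyIncompatible_of_notMem_range [SeminormedAddCommGroup E] [NormedSpace ℝ E]
    [Fintype ι] (L : E →L[ℝ] ι → ℝ) (b : ι → ℝ) (hb : b ∉ Set.range L) :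
    UniformlyIncompatible (fun i => {y | L y i = b i}) Set.univ := by
  have hclosed : IsClosed (Set.range L) :=
    (LinearMap.range (L : E →ₗ[ℝ] ι → ℝ)).closed_of_finiteDimensional
  have hδ : 0 < infDist b (Set.range L) :=
    (hclosed.notMem_iff_infDist_pos ⟨0, 0, map_zero L⟩).mp hb
  set δ := infDist b (Set.range L)
  refine ⟨δ / (‖L‖ + 1), by positivity, fun x => ?_⟩
  obtain ⟨i, hi⟩ : ∃ i, δ ≤ dist (L x i) (b i) := by
    by_contra! h
    have hlt : dist b (L x) < δ := by
      rw [dist_comm]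
      exact (dist_pi_lt_iff hδ).mpr h
    exact (infDist_le_dist_of_mem (Set.mem_range_self x)).not_gt hlt
  refine ⟨i, Set.mem_univ i, Set.disjoint_left.mpr fun y hy hyx => ?_⟩
  rw [mem_ball, dist_comm, lt_div_iff₀ (by positivity)] at hyx
  have : δ ≤ ‖L‖ * dist x y := calc
    δ ≤ dist (L x i) (L y i) := by rwa [hy]
    _ ≤ dist (L x) (L y) := dist_le_pi_dist _ _ i
    _ ≤ ‖L‖ * dist x y := L.lipschitz.dist_le_mul x y
  nlinarith [dist_nonneg (x := x) (y := y)]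

theorem uniformlyIncompatible_of_iInter_eq_empty [SeminormedAddCommGroup E] [NormedSpace ℝ E]
    [Finite ι] (f : ι → E →L[ℝ] ℝ) (b : ι → ℝ) (s : Set ι)
    (hs : (⋂ i ∈ s, {y | f i y = b i}) = ∅) :
    UniformlyIncompatible (fun i => {y | f i y = b i}) s := by
  have : Fintype s := Fintype.ofFinite s
  let L : E →L[ℝ] s → ℝ := ContinuousLinearMap.pi fun i => f i
  have hb : (fun i : s => b i) ∉ Set.range L := by
    rintro ⟨y, hy⟩
    have hy_mem : y ∈ ⋂ i ∈ s, {y | f i y = b i} :=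
      Set.mem_iInter₂.mpr fun i hi => congrFun hy ⟨i, hi⟩
    simp [hs] at hy_mem
  obtain ⟨c, hc, hsep⟩ := uniformlyIncompatible_of_notMem_range L _ hb
  refine ⟨c, hc, fun x => ?_⟩
  obtain ⟨⟨i, hi⟩, -, hdisj⟩ := hsep x
  exact ⟨i, hi, hdisj⟩

theorem hyperplanes_meeting_small_ball_compatible_general (n m : ℕ)
    (a : Fin m → (Fin n → ℝ)) (b : Fin m → ℝ) :
    ∃ r : ℝ, 0 < r ∧
      ∀ x : Fin n → ℝ,
        (∃ i, ({y : Fin n → ℝ | ∑ j, a i j * y j = b i}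
            ∩ Metric.closedBall x r).Nonempty) →
        (⋂ i ∈ {i : Fin m | ({y : Fin n → ℝ | ∑ j, a i j * y j = b i}
            ∩ Metric.closedBall x r).Nonempty},
          {y : Fin n → ℝ | ∑ j, a i j * y j = b i}).Nonempty := by
  let f i : (Fin n → ℝ) →L[ℝ] ℝ := LinearMap.toContinuousLinearMap (dotProductBilin ℝ ℝ (a i))
  obtain ⟨r, hr, hcompat⟩ := exists_radius_iInter_nonempty (fun i => {y | f i y = b i})
    (uniformlyIncompatible_of_iInter_eq_empty f b)
  exact ⟨r, hr, fun x _ => hcompat x⟩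

/-- For finitely many affine hyperplanes in `ℝⁿ` (with the sup norm),
there is a radius `r_c > 0` such that for every point `x`, the (nonempty) subfamily of
hyperplanes meeting the closed ball of radius `r_c` around `x` has a common point. -/
theorem hyperplanes_meeting_small_ball_compatible (n m : ℕ)
    (a : Fin m → (Fin n → ℝ)) (b : Fin m → ℝ) (ha : ∀ i, a i ≠ 0) :
    ∃ r : ℝ, 0 < r ∧
      ∀ x : Fin n → ℝ,
        (∃ i, ({y : Fin n → ℝ | ∑ j, a i j * y j = b i}
            ∩ Metric.closedBall x r).Nonempty) →
        (⋂ i ∈ {i : Fin m | ({y : Fin n → ℝ | ∑ j, a i j * y j = b i}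
            ∩ Metric.closedBall x r).Nonempty},
          {y : Fin n → ℝ | ∑ j, a i j * y j = b i}).Nonempty :=
  hyperplanes_meeting_small_ball_compatible_general n m a b
end

section
/- Let (Ẽ,E∞) be a valid configuration and (y,λ) a thin flow for (Ẽ,E∞) with λ_v>0 for all v∈V. Let Δθ∈ℝ, r_5≥0, and r_6,r_7∈ℝ with r_7 ≥ r_6 and |λ_w−λ_v|·(r_7−r_6) ≥ 5·r_5 for every arc vw∈Ẽ∖E∞ with λ_w≠λ_v. Let z∈ℝ and gap>0 satisfy z ≥ Δθ − r_6 and λ_min·gap > 3·r_5. Let Δℓ∈ℝ^V satisfy Δℓ_w − Δℓ_v ≤ (λ_w−λ_v)(Δθ−r_7) + 3r_5 for every arc vw∈E^>∪E^=, and Δℓ_w − Δℓ_v ≥ (λ_w−λ_v)(Δθ−r_7) − 3r_5 for every arc vw∈E^<∪E^=. Let S⊆V be such that Δℓ_v ≤ λ_v·(z−gap) for every v∈S and Δℓ_v ≥ λ_v·z for every v∉S. Then no arc of E^=∪E^> has tail in S and head outside S, and no arc of E^=∪E^< has tail outside S and head in S. -/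
/-! Both claims come from one inequality. If `a ∈ S`, `b ∉ S` and `λ_a ≤ λ_b`, the bounds
defining `S` give `Δℓ_b - Δℓ_a ≥ (λ_b - λ_a) z + λ_a · gap`; since `z ≥ Δθ - r_7` and
`λ_a · gap ≥ λ_min · gap > 3 r_5`, this exceeds `(λ_b - λ_a)(Δθ - r_7) + 3 r_5`. That contradicts
the bound on `Δℓ` along a forward arc `ab ∈ E^= ∪ E^>`, and, read backwards, along an arc
`ba ∈ E^= ∪ E^<`. -/

open MeasureTheory Set

namespace FOT

/-- A (simple) s-t path in a directed multigraph given by tail/head maps. -/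
structure STPath {V E : Type*} (tl hd : E → V) (s t : V) where
  arcs : List E
  ne : arcs ≠ []
  chain : arcs.Chain' fun e f => hd e = tl f
  first_eq : ∀ e, arcs.head? = some e → tl e = s
  last_eq : ∀ e, arcs.getLast? = some e → hd e = t
  simple : (s :: arcs.map hd).Nodup

/-- The vertices visited by a path. -/
def STPath.verts {V E : Type*} {tl hd : E → V} {s t : V} (p : STPath tl hd s t) : Set V :=
  {v | v = s ∨ ∃ e ∈ p.arcs, hd e = v}

/-- A network: finite directed multigraph, source, sink, capacities, transit times,
network inflow rate; every vertex reachable from `s` and reaching `t`. -/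
structure Network (V E : Type*) [Fintype V] [Fintype E] where
  tl : E → V
  hd : E → V
  s : V
  t : V
  s_ne_t : s ≠ t
  cap : E → ℝ
  tau : E → ℝ
  u0 : ℝ
  cap_pos : ∀ e, 0 < cap e
  tau_pos : ∀ e, 0 < tau e
  u0_pos : 0 < u0
  reach_from_s : ∀ v, Relation.ReflTransGen (fun a b => ∃ e, tl e = a ∧ hd e = b) s v
  reach_to_t : ∀ v, Relation.ReflTransGen (fun a b => ∃ e, tl e = a ∧ hd e = b) v t

variable {V E : Type*} [Fintype V] [Fintype E] [DecidableEq V]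

/-- `ν_Σ := Σ_e ν_e + u_0`. -/
noncomputable def Network.capSum (N : Network V E) : ℝ := (∑ e : E, N.cap e) + N.u0

/-- One step along an arc of the subgraph `E'`. -/
def stepIn (N : Network V E) (E' : Set E) (a b : V) : Prop :=
  ∃ e ∈ E', N.tl e = a ∧ N.hd e = b

/-- A valid configuration `(E', E*)`. -/
structure IsValidConfig (N : Network V E) (E' Estar : Set E) : Prop where
  subset : Estar ⊆ E'
  reach : ∀ v, Relation.ReflTransGen (stepIn N E') N.s v
  on_path : ∀ e ∈ Estar, ∃ p : STPath N.tl N.hd N.s N.t, (∀ f ∈ p.arcs, f ∈ E') ∧ e ∈ p.arcs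
  no_cycle : ∀ e ∈ Estar, ¬ ∃ c : List E, c ≠ [] ∧ (∀ f ∈ c, f ∈ E') ∧
    (c.Chain' fun f g => N.hd f = N.tl g) ∧
    (∀ f g, c.getLast? = some f → c.head? = some g → N.hd f = N.tl g) ∧ e ∈ c

open scoped Classical in
/-- The function `ρ_e` from the thin flow equations. -/
noncomputable def rho (N : Network V E) (Estar : Set E) (ℓ : V → ℝ) (x : E → ℝ) (e : E) : ℝ :=
  if e ∈ Estar then x e / N.cap e else max (ℓ (N.tl e)) (x e / N.cap e)

/-- The thin flow equations for a configuration `(E', E*)`. -/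
structure IsThinFlow (N : Network V E) (E' Estar : Set E) (x : E → ℝ) (ℓ : V → ℝ) : Prop where
  nonneg : ∀ e, 0 ≤ x e
  support : ∀ e, e ∉ E' → x e = 0
  conserve : ∀ v : V,
    (∑ e ∈ Finset.univ.filter (fun e => N.hd e = v), x e)
      - (∑ e ∈ Finset.univ.filter (fun e => N.tl e = v), x e)
      = (if v = N.t then N.u0 else 0) - (if v = N.s then N.u0 else 0)
  source : ℓ N.s = 1
  min_rule : ∀ w, w ≠ N.s →
    IsLeast {y : ℝ | ∃ e ∈ E', N.hd e = w ∧ y = rho N Estar ℓ x e} (ℓ w)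
  tight : ∀ e ∈ E', 0 < x e → ℓ (N.hd e) = rho N Estar ℓ x e

/-- `λ_min`, the minimum label. -/
noncomputable def lamMin (N : Network V E) (lam : V → ℝ) : ℝ :=
  Finset.univ.inf' ⟨N.s, Finset.mem_univ N.s⟩ lam

/-- `ν̲ := min{u_0, min_e ν_e}`. -/
noncomputable def capLow [Nonempty E] (N : Network V E) : ℝ :=
  min N.u0 (Finset.univ.inf' Finset.univ_nonempty N.cap)

theorem slope_add_lt_increment {la lb Δa Δb κ z gap ε : ℝ} (hl : la ≤ lb) (hκ : κ ≤ z)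
    (hε : ε < la * gap) (ha : Δa ≤ la * (z - gap)) (hb : lb * z ≤ Δb) :
    (lb - la) * κ + ε < Δb - Δa :=
  calc (lb - la) * κ + ε ≤ (lb - la) * z + ε := by gcongr
    _ < (lb - la) * z + la * gap := by gcongr
    _ = lb * z - la * (z - gap) := by ring
    _ ≤ Δb - Δa := by linarith

theorem cut_arcs_classification_general (V E : Type*) [Fintype V] [Fintype E]
    (N : Network V E)
    (Et Einf : Set E)
    (lam : V → ℝ)
    (Δθ r5 r6 r7 z gap : ℝ) (hr76 : r6 ≤ r7)
    (hz : Δθ - r6 ≤ z) (hgap : 0 < gap) (hgap' : 3 * r5 < lamMin N lam * gap)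
    (Δℓ : V → ℝ)
    (hg : ∀ e, e ∈ Et → e ∉ Einf → lam (N.tl e) ≤ lam (N.hd e) →
      Δℓ (N.hd e) - Δℓ (N.tl e) ≤ (lam (N.hd e) - lam (N.tl e)) * (Δθ - r7) + 3 * r5)
    (hh : ∀ e, e ∈ Et → e ∉ Einf → lam (N.hd e) ≤ lam (N.tl e) →
      (lam (N.hd e) - lam (N.tl e)) * (Δθ - r7) - 3 * r5 ≤ Δℓ (N.hd e) - Δℓ (N.tl e))
    (S : Set V)
    (hS1 : ∀ v ∈ S, Δℓ v ≤ lam v * (z - gap))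
    (hS2 : ∀ v, v ∉ S → lam v * z ≤ Δℓ v) :
    ∀ e, e ∈ Et → e ∉ Einf →
      (lam (N.tl e) ≤ lam (N.hd e) → ¬(N.tl e ∈ S ∧ N.hd e ∉ S)) ∧
      (lam (N.hd e) ≤ lam (N.tl e) → ¬(N.tl e ∉ S ∧ N.hd e ∈ S)) := by
  intro e he heinf
  have hκ : Δθ - r7 ≤ z := by linarith
  have hε : ∀ v, 3 * r5 < lam v * gap := fun v =>
    hgap'.trans_le (mul_le_mul_of_nonneg_right (Finset.inf'_le _ (Finset.mem_univ v)) hgap.le)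
  refine ⟨fun hle ⟨hv, hw⟩ => ?_, fun hle ⟨hv, hw⟩ => ?_⟩
  · exact (hg e he heinf hle).not_gt
      (slope_add_lt_increment hle hκ (hε _) (hS1 _ hv) (hS2 _ hw))
  · have hlower := hh e he heinf hle
    have hupper := slope_add_lt_increment hle hκ (hε _) (hS1 _ hw) (hS2 _ hv)
    linarith

/-- The cut `S` defined by small label ratios is not crossed forwards
by arcs of `E^= ∪ E^>` nor backwards by arcs of `E^= ∪ E^<`. -/
theorem cut_arcs_classification (V E : Type*) [Fintype V] [Fintype E]
    [DecidableEq V] (N : Network V E)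
    (Et Einf : Set E) (hvc : IsValidConfig N Et Einf)
    (y : E → ℝ) (lam : V → ℝ) (htf : IsThinFlow N Et Einf y lam)
    (hlam : ∀ v, 0 < lam v)
    (Δθ r5 r6 r7 z gap : ℝ) (hr5 : 0 ≤ r5) (hr76 : r6 ≤ r7)
    (hsep : ∀ e, e ∈ Et → e ∉ Einf → lam (N.hd e) ≠ lam (N.tl e) →
      5 * r5 ≤ |lam (N.hd e) - lam (N.tl e)| * (r7 - r6))
    (hz : Δθ - r6 ≤ z) (hgap : 0 < gap) (hgap' : 3 * r5 < lamMin N lam * gap)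
    (Δℓ : V → ℝ)
    (hg : ∀ e, e ∈ Et → e ∉ Einf → lam (N.tl e) ≤ lam (N.hd e) →
      Δℓ (N.hd e) - Δℓ (N.tl e) ≤ (lam (N.hd e) - lam (N.tl e)) * (Δθ - r7) + 3 * r5)
    (hh : ∀ e, e ∈ Et → e ∉ Einf → lam (N.hd e) ≤ lam (N.tl e) →
      (lam (N.hd e) - lam (N.tl e)) * (Δθ - r7) - 3 * r5 ≤ Δℓ (N.hd e) - Δℓ (N.tl e))
    (S : Set V)
    (hS1 : ∀ v ∈ S, Δℓ v ≤ lam v * (z - gap))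
    (hS2 : ∀ v, v ∉ S → lam v * z ≤ Δℓ v) :
    ∀ e, e ∈ Et → e ∉ Einf →
      (lam (N.tl e) ≤ lam (N.hd e) → ¬(N.tl e ∈ S ∧ N.hd e ∉ S)) ∧
      (lam (N.hd e) ≤ lam (N.tl e) → ¬(N.tl e ∉ S ∧ N.hd e ∈ S)) :=
  cut_arcs_classification_general V E N Et Einf lam Δθ r5 r6 r7 z gap hr76 hz hgap hgap' Δℓ hg hh S
    hS1 hS2

end FOT
end

section
/- Let (E',E*) be a valid configuration and (x',ℓ') a thin flow for (E',E*) such that x'_e ≤ u_0 for every arc e∈E (this holds in particular when the support of x' contains no directed cycle). Then ℓ'_v ≤ max{1, u_0/min_{e∈E} ν_e} for every v∈V. -/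
open MeasureTheory Set

/-! By the min rule, a vertex `w ≠ s` has `ℓ'_w ≤ ρ_e ≤ max{ℓ'_v, x'_e/ν_e}` for every arc
`e = vw` of `E'`, and `x'_e / ν_e ≤ u₀ / min_e ν_e`. So the bound `max{1, u₀ / min_e ν_e}`,
which holds at `s` because `ℓ'_s = 1`, spreads along `E'` to every vertex reachable from `s`,
that is, to all of `V`. -/

namespace FOT

variable {V E : Type*} [Fintype V] [Fintype E]

theorem rho_le_max (N : Network V E) (Estar : Set E) (ℓ : V → ℝ) (x : E → ℝ) (e : E) :
    rho N Estar ℓ x e ≤ max (ℓ (N.tl e)) (x e / N.cap e) := by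
  unfold rho
  split
  · exact le_max_right _ _
  · exact le_rfl

theorem IsThinFlow.label_le_rho [DecidableEq V] {N : Network V E} {E' Estar : Set E}
    {x : E → ℝ} {ℓ : V → ℝ} (htf : IsThinFlow N E' Estar x ℓ) {e : E} (he : e ∈ E')
    (hs : N.hd e ≠ N.s) :
    ℓ (N.hd e) ≤ rho N Estar ℓ x e :=
  (htf.min_rule _ hs).2 ⟨e, he, rfl, rfl⟩

theorem IsThinFlow.label_le_of_reachable [DecidableEq V] {N : Network V E}
    {E' Estar : Set E} {x : E → ℝ} {ℓ : V → ℝ} (htf : IsThinFlow N E' Estar x ℓ)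
    {M : ℝ} (hM : 1 ≤ M) (hrate : ∀ e ∈ E', x e / N.cap e ≤ M) {v : V}
    (hv : Relation.ReflTransGen (stepIn N E') N.s v) : ℓ v ≤ M := by
  induction hv with
  | refl => rwa [htf.source]
  | tail _ hstep ih =>
    obtain ⟨e, he, rfl, rfl⟩ := hstep
    by_cases hs : N.hd e = N.s
    · rw [hs, htf.source]
      exact hM
    · calc ℓ (N.hd e) ≤ rho N Estar ℓ x e := htf.label_le_rho he hs
        _ ≤ max (ℓ (N.tl e)) (x e / N.cap e) := rho_le_max N Estar ℓ x e
        _ ≤ M := max_le ih (hrate e he)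

theorem Network.div_cap_le_div_inf_cap [Nonempty E] (N : Network V E) {a b : ℝ} (hb : 0 ≤ b)
    (hab : a ≤ b) (e : E) : a / N.cap e ≤ b / Finset.univ.inf' Finset.univ_nonempty N.cap :=
  div_le_div₀ hb hab ((Finset.lt_inf'_iff _).2 fun f _ => N.cap_pos f)
    (Finset.inf'_le _ (Finset.mem_univ e))

/-- Thin flow labels are bounded by `max{1, u₀ / min_e ν_e}` whenever
all arc flows are at most `u₀`. -/
theorem thin_flow_labels_bounded (V E : Type*) [Fintype V] [Fintype E]
    [DecidableEq V] [Nonempty E] (N : Network V E)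
    (E' Estar : Set E) (hvc : IsValidConfig N E' Estar)
    (x : E → ℝ) (ℓ : V → ℝ) (htf : IsThinFlow N E' Estar x ℓ)
    (hx : ∀ e, x e ≤ N.u0) :
    ∀ v : V, ℓ v ≤ max 1 (N.u0 / Finset.univ.inf' Finset.univ_nonempty N.cap) := fun v =>
  htf.label_le_of_reachable (le_max_left _ _)
    (fun e _ => (N.div_cap_le_div_inf_cap N.u0_pos.le (hx e) e).trans (le_max_right _ _))
    (hvc.reach v)

end FOT
end
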